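/- arXiv:2210.11675 — 4 statements merged into one kernel-verified Lean document; each statement's English description precedes it below -/
import Mathlib

section
/- Let r1 ≤ r2 be real numbers and define P = 1 if r2 ≤ 0, P = r1/(r1 − r2) if r1 ≤ 0 < r2, and P = 0 if r1 > 0. Then for every real λ with 0 < λ ≤ 1, P ≥ λ if and only if (1 − λ)·r1 + λ·r2 ≤ 0. -/
theorem pos_ge_iff (r1 r2 : ℝ) (h : r1 ≤ r2) (P : ℝ)
    (hP : P = if r2 ≤ 0 then 1 else if r1 ≤ 0 then r1 / (r1 - r2) else 0)
    (lam : ℝ) (hlam0 : 0 < lam) (hlam1 : lam ≤ 1) :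
    P ≥ lam ↔ (1 - lam) * r1 + lam * r2 ≤ 0 := by
  subst hP
  by_cases h2 : r2 ≤ 0
  · simp only [if_pos h2]
    constructor
    · intro _
      have h1 : r1 ≤ 0 := le_trans h h2
      nlinarith
    · intro _; linarith
  · push_neg at h2
    simp only [if_neg (not_le.mpr h2)]
    by_cases h1 : r1 ≤ 0
    · simp only [if_pos h1]
      have hd : r1 - r2 < 0 := by linarith
      rw [ge_iff_le, le_div_iff_of_neg hd]
      constructor <;> intro <;> nlinarith
    · push_neg at h1
      simp only [if_neg (not_le.mpr h1)]
      constructor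
      · intro hc; linarith
      · intro hc; nlinarith
end

section
/- Let r1 < r2 < r3 be real numbers, let mu : ℝ → ℝ be the triangular membership function of (r1, r2, r3), and let λ be real with 0 < λ ≤ 1. Then sup_{x ≤ 0} mu(x) ≥ λ if and only if (1 − λ)·r1 + λ·r2 ≤ 0. -/
/-- The triangular membership function of the triangular fuzzy number `(r1, r2, r3)`. -/
noncomputable def triMu (r1 r2 r3 : ℝ) (x : ℝ) : ℝ :=
  if r1 ≤ x ∧ x ≤ r2 then (x - r1) / (r2 - r1)
  else if r2 ≤ x ∧ x ≤ r3 then (x - r3) / (r2 - r3)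
  else 0

theorem sup_triMu_nonpos_ge_iff (r1 r2 r3 : ℝ) (h12 : r1 < r2) (h23 : r2 < r3)
    (lam : ℝ) (hlam0 : 0 < lam) (hlam1 : lam ≤ 1) :
    sSup (triMu r1 r2 r3 '' {x : ℝ | x ≤ 0}) ≥ lam ↔
      (1 - lam) * r1 + lam * r2 ≤ 0 := by
  have hd : (0:ℝ) < r2 - r1 := by linarith
  have hd3 : r2 - r3 < 0 := by linarith
  rcases le_or_gt r2 0 with h2 | h2
  · -- r2 ≤ 0 : sup = 1, attained at r2
    have hg : IsGreatest (triMu r1 r2 r3 '' {x : ℝ | x ≤ 0}) 1 := by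
      constructor
      · exact ⟨r2, by simpa using h2, by simp [triMu, le_of_lt h12, div_self (ne_of_gt hd)]⟩
      · rintro y ⟨x, hx, rfl⟩
        unfold triMu
        split_ifs with h1 h3
        · rw [div_le_one hd]; linarith [h1.2]
        · have h := div_mul_cancel₀ (x - r3) (ne_of_lt hd3)
          set q := (x - r3) / (r2 - r3)
          nlinarith [h3.1]
        · norm_num
    rw [hg.csSup_eq]
    constructor
    · intro _; nlinarith
    · intro _; exact hlam1
  · rcases le_or_gt r1 0 with h1 | h1
    · -- r1 ≤ 0 < r2 : sup = (0 - r1)/(r2 - r1), attained at 0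
      set c := (0 - r1) / (r2 - r1) with hc
      have hg : IsGreatest (triMu r1 r2 r3 '' {x : ℝ | x ≤ 0}) c := by
        constructor
        · refine ⟨0, by simp, ?_⟩
          simp only [triMu, h1, le_of_lt h2, and_self, if_pos, true_and]
          exact hc.symm
        · rintro y ⟨x, hx, rfl⟩
          simp only [Set.mem_setOf_eq] at hx
          unfold triMu
          split_ifs with ha hb
          · rw [hc]; gcongr
          · linarith [hb.1, hb.2]
          · exact div_nonneg (by linarith) (by linarith)
      rw [hg.csSup_eq, hc, ge_iff_le, le_div_iff₀ hd]
      constructor <;> intro h <;> nlinarith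
    · -- 0 < r1 : sup = 0
      have hg : IsGreatest (triMu r1 r2 r3 '' {x : ℝ | x ≤ 0}) 0 := by
        constructor
        · refine ⟨0, by simp, ?_⟩
          unfold triMu
          split_ifs with ha hb
          · linarith [ha.1]
          · linarith [hb.1]
          · rfl
        · rintro y ⟨x, hx, rfl⟩
          simp only [Set.mem_setOf_eq] at hx
          unfold triMu
          split_ifs with ha hb
          · linarith [ha.1]
          · linarith [hb.1]
          · exact le_refl 0
      rw [hg.csSup_eq]
      constructor <;> intro h <;> nlinarith
end

section
/- Let E be a real inner product space, let w, A ∈ E with w ≠ 0, and let B ≥ 0 be a real number. If w − A + B·(w/‖w‖) = 0, then ‖A‖ = ‖w‖ + B; consequently ‖w‖ = ‖A‖ − B, A ≠ 0, and w = ((‖A‖ − B)/‖A‖)·A. -/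
theorem stationarity_resolution {E : Type*} [NormedAddCommGroup E] [InnerProductSpace ℝ E]
    (w A : E) (hw : w ≠ 0) (B : ℝ) (hB : 0 ≤ B)
    (h : w - A + B • (‖w‖⁻¹ • w) = 0) :
    ‖A‖ = ‖w‖ + B ∧ ‖w‖ = ‖A‖ - B ∧ A ≠ 0 ∧ w = ((‖A‖ - B) / ‖A‖) • A := by
  have hwn : (0:ℝ) < ‖w‖ := norm_pos_iff.mpr hw
  set c : ℝ := 1 + B / ‖w‖ with hc
  have hcpos : 0 < c := by positivity
  rw [sub_add_eq_add_sub, sub_eq_zero] at h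
  have hA : A = c • w := by
    rw [← h, hc, add_smul, one_smul, div_eq_mul_inv, mul_smul]
  have hnA : ‖A‖ = ‖w‖ + B := by
    rw [hA, norm_smul, Real.norm_eq_abs, abs_of_pos hcpos, hc]
    field_simp
  have hAne : A ≠ 0 := by
    intro h0
    rw [h0, norm_zero] at hnA
    linarith
  refine ⟨hnA, by linarith, hAne, ?_⟩
  have key : (‖A‖ - B) / ‖A‖ * c = 1 := by
    rw [hnA, hc]
    field_simp
    ring
  calc w = ((‖A‖ - B) / ‖A‖ * c) • w := by rw [key, one_smul]
    _ = ((‖A‖ - B) / ‖A‖) • A := by rw [mul_smul, ← hA]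
end

section
/- Let E be a real inner product space and n ∈ ℕ. For each i = 1,…,n let c_i ∈ E, and let y_i ∈ {−1, 1}, r_i ≥ 0, α_i ≥ 0, ξ_i, δ_i, μ_i, and C, b be real numbers. Set A = Σ_i α_i y_i c_i and B = Σ_i α_i r_i. Assume Σ_i α_i y_i = 0, C·δ_i − α_i − μ_i = 0 for every i, and that w ∈ E satisfies w ≠ 0 and w − A + B·(w/‖w‖) = 0. Then the Lagrangian L = (1/2)‖w‖² − Σ_i α_i (y_i(⟨w, c_i⟩ + b) − ‖w‖·r_i − 1 + ξ_i) + C·Σ_i δ_i ξ_i − Σ_i μ_i ξ_i equals −(1/2)‖A‖² + (1/2)B² + |‖A‖ − B|·B + Σ_i α_i. -/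
theorem lagrangian_dual_value {E : Type*} [NormedAddCommGroup E] [InnerProductSpace ℝ E]
    (n : ℕ) (c : Fin n → E) (y r α ξ δ μ : Fin n → ℝ) (C b : ℝ)
    (hy : ∀ i, y i = 1 ∨ y i = -1) (hr : ∀ i, 0 ≤ r i) (hα : ∀ i, 0 ≤ α i)
    (A : E) (hA : A = ∑ i, (α i * y i) • c i)
    (B : ℝ) (hB : B = ∑ i, α i * r i)
    (hsum : ∑ i, α i * y i = 0)
    (hstat : ∀ i, C * δ i - α i - μ i = 0)
    (w : E) (hw : w ≠ 0) (hgrad : w - A + B • (‖w‖⁻¹ • w) = 0) :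
    (1 / 2) * ‖w‖ ^ 2
        - ∑ i, α i * (y i * ((inner ℝ w (c i) : ℝ) + b) - ‖w‖ * r i - 1 + ξ i)
        + C * ∑ i, δ i * ξ i - ∑ i, μ i * ξ i
      = -(1 / 2) * ‖A‖ ^ 2 + (1 / 2) * B ^ 2 + |‖A‖ - B| * B + ∑ i, α i := by
  have hw0 : (0:ℝ) < ‖w‖ := norm_pos_iff.mpr hw
  have hB0 : 0 ≤ B := hB ▸ Finset.sum_nonneg fun i _ => mul_nonneg (hα i) (hr i)
  have ht0 : 0 ≤ B * ‖w‖⁻¹ := mul_nonneg hB0 (inv_nonneg.mpr hw0.le)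
  have hA' : A = (1 + B * ‖w‖⁻¹) • w := by
    have h := hgrad
    rw [smul_smul, sub_add_eq_add_sub, sub_eq_zero] at h
    rw [add_smul, one_smul, ← h, add_comm]
  have hnA : ‖A‖ = ‖w‖ + B := by
    rw [hA', norm_smul, Real.norm_eq_abs, abs_of_nonneg (by linarith), add_mul, one_mul,
      mul_assoc, inv_mul_cancel₀ hw0.ne', mul_one]
  have habs : |‖A‖ - B| = ‖w‖ := by
    rw [hnA, add_sub_cancel_right, abs_of_pos hw0]
  have hinnerval : (inner ℝ w A : ℝ) = ‖w‖ ^ 2 + B * ‖w‖ := by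
    rw [hA', real_inner_smul_right, real_inner_self_eq_norm_sq, add_mul, one_mul, mul_assoc]
    have : ‖w‖⁻¹ * ‖w‖ ^ 2 = ‖w‖ := by field_simp
    rw [this]
  have hinnerA : ∑ i, α i * y i * (inner ℝ w (c i) : ℝ) = (inner ℝ w A : ℝ) := by
    rw [hA, inner_sum]
    exact Finset.sum_congr rfl fun i _ => (real_inner_smul_right _ _ _).symm
  have hexp : ∑ i, α i * (y i * ((inner ℝ w (c i) : ℝ) + b) - ‖w‖ * r i - 1 + ξ i)
      = (∑ i, α i * y i * (inner ℝ w (c i) : ℝ)) + b * (∑ i, α i * y i)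
        - ‖w‖ * (∑ i, α i * r i) - (∑ i, α i) + ∑ i, α i * ξ i := by
    rw [Finset.mul_sum, Finset.mul_sum, ← Finset.sum_add_distrib, ← Finset.sum_sub_distrib,
      ← Finset.sum_sub_distrib, ← Finset.sum_add_distrib]
    exact Finset.sum_congr rfl fun i _ => by ring
  have hxi : C * (∑ i, δ i * ξ i) - (∑ i, μ i * ξ i) - ∑ i, α i * ξ i = 0 := by
    rw [Finset.mul_sum, ← Finset.sum_sub_distrib, ← Finset.sum_sub_distrib]
    apply Finset.sum_eq_zero
    intro i _
    linear_combination ξ i * hstat i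
  rw [hexp, hsum, hinnerA, hinnerval, ← hB, habs, hnA]
  linear_combination hxi
end
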